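/- arXiv:1108.2848 — 5 statements merged into one kernel-verified Lean document; each statement's English description precedes it below -/
import Mathlib

section
/- Let S be a semigroup and h : I∞↗(ℕ) → S a semigroup homomorphism. If h is not injective, then h factors through the shift homomorphism f : I∞↗(ℕ) → ℤ: there exists a map g : ℤ → S with g(m + n) = g(m) * g(n) for all m, n ∈ ℤ and h = g ∘ f; consequently the image of h is a cyclic subgroup of S. In particular, every homomorphism of I∞↗(ℕ) into a semigroup is either a monomorphism or has image a cyclic group. -/
open Set

/-- Cofinite monotone partial bijections of `ℕ`. -/
def IsCMPB (e : PartialEquiv ℕ ℕ) : Prop :=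
  e.sourceᶜ.Finite ∧ e.targetᶜ.Finite ∧
    ∀ ⦃m n : ℕ⦄, m ∈ e.source → n ∈ e.source → m < n → e m < e n

lemma IsCMPB.symm {e : PartialEquiv ℕ ℕ} (he : IsCMPB e) : IsCMPB e.symm := by
  obtain ⟨h1, h2, h3⟩ := he
  refine ⟨by simpa using h2, by simpa using h1, ?_⟩
  intro m n hm hn hmn
  have hm' : e.symm m ∈ e.source := e.map_target (by simpa using hm)
  have hn' : e.symm n ∈ e.source := e.map_target (by simpa using hn)
  have hEm : e (e.symm m) = m := e.right_inv hm
  have hEn : e (e.symm n) = n := e.right_inv hn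
  rcases lt_trichotomy (e.symm m) (e.symm n) with h | h | h
  · exact h
  · exfalso
    have : m = n := by rw [← hEm, ← hEn, h]
    omega
  · exfalso
    have := h3 hn' hm' h
    rw [hEm, hEn] at this
    omega

private lemma trans_source_compl_finite {e f : PartialEquiv ℕ ℕ}
    (he : e.sourceᶜ.Finite) (hf : f.sourceᶜ.Finite) : ((e.trans f).source)ᶜ.Finite := by
  rw [PartialEquiv.trans_source]
  have hT : (e.source ∩ e ⁻¹' f.sourceᶜ).Finite := by
    apply Set.Finite.of_finite_image ?_ (e.injOn.mono inter_subset_left)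
    apply hf.subset
    rintro _ ⟨x, ⟨_, hx2⟩, rfl⟩
    exact hx2
  apply (he.union hT).subset
  intro x hx
  simp only [mem_compl_iff, mem_inter_iff, not_and_or] at hx
  by_cases h : x ∈ e.source
  · rcases hx with h' | h'
    · exact absurd h h'
    · exact Or.inr ⟨h, h'⟩
  · exact Or.inl h

lemma IsCMPB.trans {e f : PartialEquiv ℕ ℕ} (he : IsCMPB e) (hf : IsCMPB f) :
    IsCMPB (e.trans f) := by
  refine ⟨trans_source_compl_finite he.1 hf.1, ?_, ?_⟩
  · have h : (((e.trans f).symm).source)ᶜ.Finite := by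
      rw [PartialEquiv.trans_symm_eq_symm_trans_symm]
      exact trans_source_compl_finite (by simpa using hf.2.1) (by simpa using he.2.1)
    simpa using h
  · intro m n hm hn hmn
    rw [PartialEquiv.trans_source] at hm hn
    show f (e m) < f (e n)
    exact hf.2.2 hm.2 hn.2 (he.2.2 hm.1 hn.1 hmn)

lemma isCMPB_congr {e e' : PartialEquiv ℕ ℕ} (h : e ≈ e') : IsCMPB e ↔ IsCMPB e' := by
  constructor <;> intro ⟨h1, h2, h3⟩
  · refine ⟨(PartialEquiv.EqOnSource.source_eq h) ▸ h1, (PartialEquiv.EqOnSource.target_eq h) ▸ h2, ?_⟩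
    intro m n hm hn hmn
    rw [← (PartialEquiv.EqOnSource.source_eq h)] at hm hn
    rw [← (PartialEquiv.EqOnSource.eqOn h) hm, ← (PartialEquiv.EqOnSource.eqOn h) hn]
    exact h3 hm hn hmn
  · refine ⟨(PartialEquiv.EqOnSource.source_eq h) ▸ h1, (PartialEquiv.EqOnSource.target_eq h) ▸ h2, ?_⟩
    intro m n hm hn hmn
    rw [(PartialEquiv.EqOnSource.eqOn h) hm, (PartialEquiv.EqOnSource.eqOn h) hn]
    exact h3 ((PartialEquiv.EqOnSource.source_eq h) ▸ hm) ((PartialEquiv.EqOnSource.source_eq h) ▸ hn) hmn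

/-- The type of partial bijections of `ℕ` up to equality on the source. -/
abbrev PEQ : Type := Quotient (PartialEquiv.eqOnSourceSetoid (α := ℕ) (β := ℕ))

instance : Mul PEQ :=
  ⟨Quotient.map₂ PartialEquiv.trans fun _ _ h _ _ h' => PartialEquiv.EqOnSource.trans' h h'⟩

lemma PEQ.mk_mul (e f : PartialEquiv ℕ ℕ) : (⟦e⟧ * ⟦f⟧ : PEQ) = ⟦e.trans f⟧ := rfl

instance : Semigroup PEQ where
  mul_assoc a b c := by
    induction a using Quotient.inductionOn with | h a =>
    induction b using Quotient.inductionOn with | h b =>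
    induction c using Quotient.inductionOn with | h c =>
    simp only [PEQ.mk_mul, PartialEquiv.trans_assoc]

/-- The property of being a cofinite monotone partial bijection, on `PEQ`. -/
def PEQ.IsGood : PEQ → Prop :=
  Quotient.lift IsCMPB fun _ _ h => propext (isCMPB_congr h)

lemma PEQ.IsGood.mul {a b : PEQ} (ha : a.IsGood) (hb : b.IsGood) : (a * b).IsGood := by
  induction a using Quotient.inductionOn with | h a =>
  induction b using Quotient.inductionOn with | h b =>
  exact IsCMPB.trans ha hb

/-- The semigroup `I∞↗(ℕ)` of cofinite monotone partial bijections of `ℕ`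
(partial bijections being identified when they have the same source and coincide there). -/
def Imon : Type := {q : PEQ // q.IsGood}

instance : Mul Imon := ⟨fun a b => ⟨a.1 * b.1, a.2.mul b.2⟩⟩

instance : Semigroup Imon where
  mul_assoc a b c := Subtype.ext (mul_assoc a.1 b.1 c.1)

/-- The underlying symmetrization (inverse partial bijection), on `PEQ`. -/
def PEQ.symm : PEQ → PEQ := Quotient.map PartialEquiv.symm fun _ _ h => PartialEquiv.EqOnSource.symm' h

lemma PEQ.IsGood.symm {a : PEQ} (ha : a.IsGood) : a.symm.IsGood := by
  induction a using Quotient.inductionOn with | h a =>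
  exact IsCMPB.symm ha

/-- The inverse in the inverse semigroup `I∞↗(ℕ)`. -/
instance : Inv Imon := ⟨fun a => ⟨a.1.symm, a.2.symm⟩⟩

/-- The source (domain) of an element of `PEQ`. -/
def PEQ.source : PEQ → Set ℕ :=
  Quotient.lift (fun e => e.source) fun _ _ h => (PartialEquiv.EqOnSource.source_eq h)

/-- The target (range) of an element of `PEQ`. -/
def PEQ.target : PEQ → Set ℕ :=
  Quotient.lift (fun e => e.target) fun _ _ h => (PartialEquiv.EqOnSource.target_eq h)

/-- The source (domain) of a cofinite monotone partial bijection of `ℕ`. -/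
def Imon.source (a : Imon) : Set ℕ := a.1.source

/-- The target (range) of a cofinite monotone partial bijection of `ℕ`. -/
def Imon.target (a : Imon) : Set ℕ := a.1.target

/-- The graph of an element of `PEQ`: pairs `(x, y)` with `x` in the source mapped to `y`. -/
def PEQ.graph : PEQ → Set (ℕ × ℕ) :=
  Quotient.lift (fun e => {p : ℕ × ℕ | p.1 ∈ e.source ∧ e p.1 = p.2}) fun e e' h => by
    ext p
    simp only [mem_setOf_eq]
    constructor
    · rintro ⟨h1, h2⟩
      exact ⟨(PartialEquiv.EqOnSource.source_eq h) ▸ h1, by rw [← (PartialEquiv.EqOnSource.eqOn h) h1]; exact h2⟩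
    · rintro ⟨h1, h2⟩
      refine ⟨(PartialEquiv.EqOnSource.source_eq h) ▸ h1, ?_⟩
      rw [(PartialEquiv.EqOnSource.eqOn h) ((PartialEquiv.EqOnSource.source_eq h) ▸ h1 : p.1 ∈ e.source)]
      exact h2

/-- The graph of a cofinite monotone partial bijection of `ℕ`. -/
def Imon.graph (a : Imon) : Set (ℕ × ℕ) := a.1.graph

/-- The natural partial order on idempotents: `ε ≤ ι` iff `ε * ι = ι * ε = ε`. -/
def idemLE (ε ι : Imon) : Prop := ε * ι = ε ∧ ι * ε = ε

/-- The everywhere-defined partial bijection `n ↦ n + 1`. -/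
def alphaPE : PartialEquiv ℕ ℕ where
  toFun n := n + 1
  invFun n := n - 1
  source := Set.univ
  target := {n : ℕ | 1 ≤ n}
  map_source' n _ := Nat.le_add_left 1 n
  map_target' _ _ := trivial
  left_inv' n _ := by show n + 1 - 1 = n; omega
  right_inv' n hn := by
    simp only [Set.mem_setOf_eq] at hn
    show n - 1 + 1 = n
    omega

lemma alphaPE_good : IsCMPB alphaPE := by
  refine ⟨by simp [alphaPE], ?_, ?_⟩
  · apply (Set.finite_singleton 0).subset
    intro n hn
    simp only [alphaPE, mem_compl_iff, mem_setOf_eq, not_le] at hn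
    simp only [mem_singleton_iff]
    omega
  · intro m n _ _ h
    show m + 1 < n + 1
    omega

/-- The generator `α : n ↦ n + 1` of the bicyclic subsemigroup. -/
def aGen : Imon := ⟨⟦alphaPE⟧, alphaPE_good⟩

/-- The generator `β : n ↦ n - 1` (with source `{n | 1 ≤ n}`) of the bicyclic subsemigroup. -/
def bGen : Imon := aGen⁻¹

/-- The bicyclic subsemigroup `C_ℕ(α, β)` of `I∞↗(ℕ)`, generated by `α` and `β`. -/
def Cbic : Subsemigroup Imon := Subsemigroup.closure {aGen, bGen}

/-!
A homomorphism `h` identifying two distinct elements `u ≠ v` already identifies `1` with the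
idempotent `ε₁ = idFrom 1`. If `u` and `v` both act as `i ↦ i + c` far out, pick a pair `i ↦ j`
of `u` that `v` lacks: multiplying on the left by the enumeration of `{i} ∪ [N, ∞)` and on the right
by the inverse enumeration of `{j} ∪ [N + c, ∞)` turns `u` into `1` and `v` into `ε₁`. If the
translations differ, multiplying by shifts on both sides turns `u` into `1` and `v` into a shift
`x ≠ 1`; then `x x⁻¹ ≠ x⁻¹ x` have the same image and the same translation.

Once `h 1 = h ε₁`, conjugating by `shift 1` gives `h εₖ = h 1` for all `k`, and `ε_N γ = ε_N · shift (f γ)`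
for large `N` gives `h γ = h (shift (f γ))`.
-/

namespace Imon

variable {a b : Imon} {N M : ℕ} {c d : ℤ}

lemma induction_on {P : Imon → Prop} (a : Imon) (mk : ∀ e (he : IsCMPB e), P ⟨⟦e⟧, he⟩) : P a := by
  obtain ⟨q, hq⟩ := a
  induction q using Quotient.inductionOn with | h e => exact mk e hq

lemma mem_graph_mk {e : PartialEquiv ℕ ℕ} (he : IsCMPB e) {i j : ℕ} :
    (i, j) ∈ Imon.graph ⟨⟦e⟧, he⟩ ↔ i ∈ e.source ∧ e i = j :=
  Iff.rfl

lemma ext_graph (h : ∀ i j, (i, j) ∈ a.graph ↔ (i, j) ∈ b.graph) : a = b := by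
  induction a using Imon.induction_on with | mk e he =>
  induction b using Imon.induction_on with | mk e' he' =>
  simp only [mem_graph_mk] at h
  have hsource : e.source = e'.source :=
    Set.ext fun i => ⟨fun hi => ((h i _).1 ⟨hi, rfl⟩).1, fun hi => ((h i _).2 ⟨hi, rfl⟩).1⟩
  exact Subtype.ext <| Quotient.sound ⟨hsource, fun i hi => ((h i _).1 ⟨hi, rfl⟩).2.symm⟩

lemma mem_graph_mul {i k : ℕ} :
    (i, k) ∈ (a * b).graph ↔ ∃ j, (i, j) ∈ a.graph ∧ (j, k) ∈ b.graph := by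
  induction a using Imon.induction_on with | mk e he =>
  induction b using Imon.induction_on with | mk e' he' =>
  change i ∈ (e.trans e').source ∧ e' (e i) = k ↔ _
  simp only [mem_graph_mk, PartialEquiv.trans_source, Set.mem_inter_iff, Set.mem_preimage]
  constructor
  · rintro ⟨⟨hi, hei⟩, rfl⟩
    exact ⟨e i, ⟨hi, rfl⟩, hei, rfl⟩
  · rintro ⟨_, ⟨hi, rfl⟩, hei, rfl⟩
    exact ⟨⟨hi, hei⟩, rfl⟩

lemma mem_graph_inv {i j : ℕ} : (i, j) ∈ a⁻¹.graph ↔ (j, i) ∈ a.graph := by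
  induction a using Imon.induction_on with | mk e he =>
  change i ∈ e.symm.source ∧ e.symm i = j ↔ j ∈ e.source ∧ e j = i
  constructor
  · rintro ⟨hi, rfl⟩
    exact ⟨e.map_target hi, e.right_inv hi⟩
  · rintro ⟨hj, rfl⟩
    exact ⟨e.map_source hj, e.left_inv hj⟩

lemma eq_of_mem_graph {i j j' : ℕ} (h : (i, j) ∈ a.graph) (h' : (i, j') ∈ a.graph) :
    j = j' := by
  induction a using Imon.induction_on with | mk e he =>
  exact h.2.symm.trans h'.2

lemma lt_of_mem_graph {i j i' j' : ℕ} (h : (i, j) ∈ a.graph)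
    (h' : (i', j') ∈ a.graph) (hi : i < i') : j < j' := by
  induction a using Imon.induction_on with | mk e he =>
  rw [mem_graph_mk] at h h'
  obtain ⟨hi₁, rfl⟩ := h
  obtain ⟨hi₂, rfl⟩ := h'
  exact he.2.2 hi₁ hi₂ hi

lemma exists_forall_ge_exists_mem_graph (a : Imon) : ∃ N, ∀ i, N ≤ i → ∃ j, (i, j) ∈ a.graph := by
  induction a using Imon.induction_on with | mk e he =>
  have : e.source ∈ Filter.atTop := Nat.cofinite_eq_atTop ▸ Filter.mem_cofinite.2 he.1
  obtain ⟨N, hN⟩ := Filter.mem_atTop_sets.1 this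
  exact ⟨N, fun i hi => ⟨e i, hN i hi, rfl⟩⟩

noncomputable def ofStrictMonoOn (φ : ℕ → ℕ) (s : Set ℕ) (hφ : StrictMonoOn φ s)
    (hs : sᶜ.Finite) (ht : (φ '' s)ᶜ.Finite) : Imon :=
  ⟨⟦hφ.injOn.toPartialEquiv φ s⟧, hs, ht, fun _ _ hm hn hmn => hφ hm hn hmn⟩

lemma mem_graph_ofStrictMonoOn {φ : ℕ → ℕ} {s : Set ℕ} {hφ : StrictMonoOn φ s}
    {hs : sᶜ.Finite} {ht : (φ '' s)ᶜ.Finite} {i j : ℕ} :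
    (i, j) ∈ (ofStrictMonoOn φ s hφ hs ht).graph ↔ i ∈ s ∧ φ i = j :=
  Iff.rfl

noncomputable def shift (n : ℤ) : Imon :=
  ofStrictMonoOn (fun i => ((i : ℤ) + n).toNat) {i | 0 ≤ (i : ℤ) + n}
    (fun i hi i' hi' h => by simp only [Set.mem_ofPred_eq] at hi hi'; dsimp only; omega)
    ((Set.finite_Iio (-n).toNat).subset fun i hi => by
      simp only [Set.mem_compl_iff, Set.mem_ofPred_eq, Set.mem_Iio] at hi ⊢; omega)
    ((Set.finite_Iio n.toNat).subset fun j hj => by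
      by_contra hlt
      exact hj ⟨(j - n).toNat, by simp only [Set.mem_ofPred_eq]; omega, by
        simp only [Set.mem_Iio] at hlt; dsimp only; omega⟩)

lemma mem_graph_shift {n : ℤ} {i j : ℕ} : (i, j) ∈ (shift n).graph ↔ (j : ℤ) = i + n :=
  mem_graph_ofStrictMonoOn.trans <| by simp only [Set.mem_ofPred_eq]; omega

noncomputable instance : One Imon := ⟨shift 0⟩

lemma mem_graph_one {i j : ℕ} : (i, j) ∈ (1 : Imon).graph ↔ i = j := by
  change (i, j) ∈ (shift 0).graph ↔ i = j
  rw [mem_graph_shift]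
  omega

protected lemma one_mul (a : Imon) : 1 * a = a :=
  ext_graph fun i k => by simp only [mem_graph_mul, mem_graph_one, exists_eq_left']

protected lemma mul_one (a : Imon) : a * 1 = a :=
  ext_graph fun i k => by simp only [mem_graph_mul, mem_graph_one, exists_eq_right]

noncomputable def idFrom (k : ℕ) : Imon :=
  ofStrictMonoOn id (Set.Ici k) strictMonoOn_id (by simp [Set.finite_Iio])
    (by simp [Set.finite_Iio])

lemma mem_graph_idFrom {k i j : ℕ} : (i, j) ∈ (idFrom k).graph ↔ k ≤ i ∧ i = j :=
  Iff.rfl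

noncomputable def enumInsertIci (i N : ℕ) (hi : i < N) : Imon :=
  ofStrictMonoOn (fun k => if k = 0 then i else N + k - 1) Set.univ
    (fun k _ k' _ h => by dsimp only; split_ifs <;> omega)
    (by simp)
    ((Set.finite_Iio N).subset fun m hm => by
      by_contra hlt
      simp only [Set.mem_Iio, not_lt] at hlt
      exact hm ⟨m - N + 1, trivial, by dsimp only; rw [if_neg (by omega)]; omega⟩)

lemma mem_graph_enumInsertIci {i N : ℕ} {hi : i < N} {k m : ℕ} :
    (k, m) ∈ (enumInsertIci i N hi).graph ↔ (if k = 0 then i else N + k - 1) = m :=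
  mem_graph_ofStrictMonoOn.trans <| and_iff_right trivial

def ShiftsFrom (a : Imon) (N : ℕ) (c : ℤ) : Prop :=
  ∀ i j, N ≤ i → ((i, j) ∈ a.graph ↔ (j : ℤ) = i + c)

lemma ShiftsFrom.mono (ha : ShiftsFrom a N c) {N' : ℕ} (h : N ≤ N') : ShiftsFrom a N' c :=
  fun i j hi => ha i j (h.trans hi)

lemma shiftsFrom_shift (n : ℤ) : ShiftsFrom (shift n) 0 n :=
  fun _ _ _ => mem_graph_shift

lemma ShiftsFrom.mul (ha : ShiftsFrom a N c) (hb : ShiftsFrom b M d) :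
    ShiftsFrom (a * b) (N + M + c.natAbs) (c + d) := by
  intro i k hi
  rw [mem_graph_mul]
  constructor
  · rintro ⟨j, hij, hjk⟩
    have hj := (ha i j (by omega)).1 hij
    have := (hb j k (by omega)).1 hjk
    omega
  · intro hk
    exact ⟨(i + c).toNat, (ha _ _ (by omega)).2 (by omega), (hb _ _ (by omega)).2 (by omega)⟩

lemma ShiftsFrom.mem_graph_add (ha : ShiftsFrom a N c) {N' M' : ℕ} (hN : N ≤ N')
    (hM : (M' : ℤ) = N' + c) (t : ℕ) : (N' + t, M' + t) ∈ a.graph :=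
  (ha _ _ (by omega)).2 (by push_cast; omega)

lemma exists_shiftsFrom
    (h : ∃ N : ℕ, ∀ i j : ℕ, N ≤ i → (i, j) ∈ a.graph → (j : ℤ) = i + c) :
    ∃ N, ShiftsFrom a N c := by
  obtain ⟨N, hN⟩ := h
  obtain ⟨N', hN'⟩ := exists_forall_ge_exists_mem_graph a
  refine ⟨max N N', fun i j hi => ⟨hN i j (le_of_max_le_left hi), fun hj => ?_⟩⟩
  obtain ⟨j', hj'⟩ := hN' i (le_of_max_le_right hi)
  have := hN i j' (le_of_max_le_left hi) hj'
  rwa [show j = j' by omega]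

lemma idFrom_zero : idFrom 0 = 1 :=
  ext_graph fun i j => by simp only [mem_graph_idFrom, mem_graph_one, zero_le, true_and]

lemma shift_neg_one_mul_idFrom_mul_shift_one (k : ℕ) :
    shift (-1) * idFrom k * shift 1 = idFrom (k + 1) :=
  ext_graph fun i j => by
    simp only [mem_graph_mul, mem_graph_shift, mem_graph_idFrom]
    constructor
    · rintro ⟨_, ⟨m, hm, hk, rfl⟩, hj⟩
      omega
    · rintro ⟨hk, rfl⟩
      exact ⟨i - 1, ⟨i - 1, by omega, by omega, rfl⟩, by omega⟩

lemma idFrom_mul_eq_of_shiftsFrom (ha : ShiftsFrom a N c) (hb : ShiftsFrom b N c) :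
    idFrom N * a = idFrom N * b :=
  ext_graph fun i j => by
    simp only [mem_graph_mul, mem_graph_idFrom, and_assoc, exists_and_left, exists_eq_left']
    exact and_congr_right fun hi => (ha i j hi).trans (hb i j hi).symm

lemma shift_mul_shift_neg_ne (hc : c ≠ 0) : shift c * shift (-c) ≠ shift (-c) * shift c := by
  intro h
  have h₀ := Set.ext_iff.1 (congrArg graph h) (0, 0)
  simp only [mem_graph_mul, mem_graph_shift] at h₀
  rcases hc.lt_or_gt with hc | hc
  · obtain ⟨j, hj, -⟩ := h₀.2 ⟨(-c).toNat, by omega, by omega⟩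
    omega
  · obtain ⟨j, hj, -⟩ := h₀.1 ⟨c.toNat, by omega, by omega⟩
    omega

lemma shift_mul_mul_shift_neg (ha : ShiftsFrom a N d) (M : ℕ) :
    shift N * a * shift (-M) = shift (N + d - M) :=
  ext_graph fun k l => by
    simp only [mem_graph_mul, mem_graph_shift]
    constructor
    · rintro ⟨n, ⟨m, hm, hmn⟩, hl⟩
      have := (ha m n (by omega)).1 hmn
      omega
    · intro hl
      exact ⟨M + l, ⟨k + N, by push_cast; ring, (ha _ _ (by omega)).2 (by push_cast; omega)⟩,
        by push_cast; ring⟩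

lemma mem_graph_enumInsertIci_mul_mul_inv {i j : ℕ} (hi : i < N) (hj : j < M)
    (htail : ∀ t, (N + t, M + t) ∈ a.graph) {k l : ℕ} :
    (k, l) ∈ (enumInsertIci i N hi * a * (enumInsertIci j M hj)⁻¹).graph ↔
      k = l ∧ (k = 0 → (i, j) ∈ a.graph) := by
  have hgraph : (k, l) ∈ (enumInsertIci i N hi * a * (enumInsertIci j M hj)⁻¹).graph ↔
      ((if k = 0 then i else N + k - 1), (if l = 0 then j else M + l - 1)) ∈ a.graph := by
    simp only [mem_graph_mul, mem_graph_inv, mem_graph_enumInsertIci]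
    exact ⟨fun ⟨_, ⟨_, hk, h⟩, hl⟩ => hk ▸ hl ▸ h, fun h => ⟨_, ⟨_, rfl, h⟩, rfl⟩⟩
  have htail_iff : ∀ t n, (N + t, n) ∈ a.graph ↔ n = M + t :=
    fun t n => ⟨fun h => eq_of_mem_graph h (htail t), by rintro rfl; exact htail t⟩
  rw [hgraph]
  rcases k with _ | k <;> rcases l with _ | l <;>
    simp only [↓reduceIte, Nat.add_one_ne_zero, Nat.add_succ_sub_one, true_and, true_implies,
      false_implies, and_true, htail_iff]
  · -- `a` maps `i < N` below `a N = M`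
    exact iff_of_false (fun h => by have := lt_of_mem_graph h (htail 0) hi; omega) (by omega)
  · exact iff_false_intro (by omega)
  · exact ⟨fun _ => by omega, fun _ => by omega⟩

section Hom

variable {S : Type*} [Semigroup S] (h : Imon →ₙ* S)

lemma map_mul_comm_of_map_eq_map_one {x : Imon} (hx : h x = h 1) (y : Imon) :
    h (x * y) = h (y * x) := by
  rw [map_mul, map_mul, hx, ← map_mul, ← map_mul, Imon.one_mul, Imon.mul_one]

lemma map_one_eq_map_idFrom_one_of_mem_graph {u v : Imon} (huv : h u = h v)
    (hu : ShiftsFrom u N c) (hv : ShiftsFrom v N c) {i j : ℕ} (hiu : (i, j) ∈ u.graph)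
    (hiv : (i, j) ∉ v.graph) : h 1 = h (idFrom 1) := by
  set N' := N + i + j + c.natAbs + 1
  set M' := (N' + c).toNat
  have hi : i < N' := by omega
  have hj : j < M' := by omega
  have hN : N ≤ N' := by omega
  have hM : (M' : ℤ) = N' + c := by omega
  have conj_u : enumInsertIci i N' hi * u * (enumInsertIci j M' hj)⁻¹ = 1 :=
    ext_graph fun k l => by
      rw [mem_graph_enumInsertIci_mul_mul_inv hi hj (hu.mem_graph_add hN hM), mem_graph_one]
      exact and_iff_left fun _ => hiu
  have conj_v : enumInsertIci i N' hi * v * (enumInsertIci j M' hj)⁻¹ = idFrom 1 :=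
    ext_graph fun k l => by
      rw [mem_graph_enumInsertIci_mul_mul_inv hi hj (hv.mem_graph_add hN hM), mem_graph_idFrom]
      simp only [hiv, imp_false]
      omega
  rw [← conj_u, ← conj_v]
  simp only [map_mul, huv]

lemma map_one_eq_map_idFrom_one_of_ne {u v : Imon} (huv : h u = h v) (hne : u ≠ v)
    (hu : ShiftsFrom u N c) (hv : ShiftsFrom v M c) : h 1 = h (idFrom 1) := by
  replace hu := hu.mono (le_max_left N M)
  replace hv := hv.mono (le_max_right N M)
  by_contra hcollapse
  refine hne (ext_graph fun i j => ⟨fun hiu => ?_, fun hiv => ?_⟩)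
  · by_contra hiv
    exact hcollapse (map_one_eq_map_idFrom_one_of_mem_graph h huv hu hv hiu hiv)
  · by_contra hiu
    exact hcollapse (map_one_eq_map_idFrom_one_of_mem_graph h huv.symm hv hu hiv hiu)

lemma map_one_eq_map_idFrom_one (hni : ¬ Function.Injective h)
    (hshift : ∀ a : Imon, ∃ N c, ShiftsFrom a N c) : h 1 = h (idFrom 1) := by
  obtain ⟨u, v, huv, hne⟩ := Function.not_injective_iff.1 hni
  obtain ⟨Nu, c, hu⟩ := hshift u
  obtain ⟨Nv, d, hv⟩ := hshift v
  obtain rfl | hcd := eq_or_ne c d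
  · exact map_one_eq_map_idFrom_one_of_ne h huv hne hu hv
  set N := Nu + Nv + c.natAbs
  set M := (N + c).toNat
  set e := (N : ℤ) + d - M
  have hu_conj : shift N * u * shift (-M) = 1 := by
    rw [shift_mul_mul_shift_neg (hu.mono (by omega))]
    exact congrArg shift (by omega)
  have hone : h (shift e) = h 1 := by
    rw [← shift_mul_mul_shift_neg (hv.mono (by omega)), ← hu_conj]
    simp only [map_mul, huv]
  have hu' := (shiftsFrom_shift e).mul (shiftsFrom_shift (-e))
  have hv' := (shiftsFrom_shift (-e)).mul (shiftsFrom_shift e)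
  rw [add_neg_cancel] at hu'
  rw [neg_add_cancel] at hv'
  exact map_one_eq_map_idFrom_one_of_ne h (map_mul_comm_of_map_eq_map_one h hone _)
    (shift_mul_shift_neg_ne (by omega)) hu' hv'

lemma map_idFrom (hone : h 1 = h (idFrom 1)) (k : ℕ) : h (idFrom k) = h 1 := by
  induction k with
  | zero => rw [idFrom_zero]
  | succ k ih =>
    calc h (idFrom (k + 1)) = h (shift (-1)) * h (idFrom k) * h (shift 1) := by
          rw [← shift_neg_one_mul_idFrom_mul_shift_one, map_mul, map_mul]
      _ = h (shift (-1)) * h (idFrom 0) * h (shift 1) := by rw [ih, idFrom_zero]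
      _ = h 1 := by rw [← map_mul, ← map_mul, shift_neg_one_mul_idFrom_mul_shift_one, hone]

lemma map_eq_of_shiftsFrom (hone : h 1 = h (idFrom 1)) (ha : ShiftsFrom a N c)
    (hb : ShiftsFrom b M c) : h a = h b := by
  have habsorb : ∀ x : Imon, h (idFrom (max N M) * x) = h x := fun x => by
    rw [map_mul, map_idFrom h hone, ← map_mul, Imon.one_mul]
  rw [← habsorb a, ← habsorb b,
    idFrom_mul_eq_of_shiftsFrom (ha.mono (le_max_left N M)) (hb.mono (le_max_right N M))]

end Hom

end Imon

/-- every non-injective semigroup homomorphism `h` from `I∞↗(ℕ)` into a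
semigroup `S` factors through the shift homomorphism `f : I∞↗(ℕ) → ℤ` via a homomorphism
`g : ℤ → S`; hence the image of `h` is a cyclic subgroup of `S`. -/
theorem Imon_hom_factors_through_shift {S : Type*} [Semigroup S]
    (f : Imon → ℤ)
    (hf : ∀ γ : Imon, ∃ N : ℕ, ∀ i j : ℕ, N ≤ i → (i, j) ∈ γ.graph →
      (j : ℤ) = (i : ℤ) + f γ)
    (h : Imon → S) (hhom : ∀ x y : Imon, h (x * y) = h x * h y)
    (hni : ¬ Function.Injective h) :
    ∃ g : ℤ → S, (∀ m n : ℤ, g (m + n) = g m * g n) ∧ h = g ∘ f := by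
  let H : Imon →ₙ* S := ⟨h, hhom⟩
  have hshift (γ : Imon) : ∃ N, γ.ShiftsFrom N (f γ) := Imon.exists_shiftsFrom (hf γ)
  have hone : H 1 = H (Imon.idFrom 1) :=
    Imon.map_one_eq_map_idFrom_one H hni fun γ => (hshift γ).imp fun _ hN => ⟨f γ, hN⟩
  refine ⟨fun n => h (Imon.shift n), fun m n => ?_, funext fun γ => ?_⟩
  · exact (Imon.map_eq_of_shiftsFrom H hone (Imon.shiftsFrom_shift (m + n))
      ((Imon.shiftsFrom_shift m).mul (Imon.shiftsFrom_shift n))).trans (hhom _ _)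
  · obtain ⟨N, hN⟩ := hshift γ
    exact Imon.map_eq_of_shiftsFrom H hone hN (Imon.shiftsFrom_shift (f γ))
end

section
/- Let E be an infinite semilattice (a commutative semigroup in which every element is idempotent) such that the up-set ↑e = {f ∈ E : e ≤ f} is finite for every e ∈ E, where ≤ is the natural partial order (e ≤ f iff e * f = e). Then the only locally compact Hausdorff topology on E relative to which the semilattice operation is continuous (i.e., E is a topological semilattice) is the discrete topology. -/
/-!
If `e` were a limit of elements strictly below it, a compact neighbourhood `K` of `e` would
contain a strictly descending chain `z₀ > z₁ > ⋯`: given `z_n`, pick `t` close to `e` outside the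
finite set `↑z_n`; then `z_{n+1} = z_n * t` stays close to `z_n * e = z_n`. By compactness some `w`
lies below every `z_n`, so `↑w` is infinite. Hence no element below `e` and different from it is
near `e`, and pulling this back along `x ↦ e * x` shows that `↑e` is open. Finally `{e}` is `↑e`
minus the finitely many closed sets `↑f` with `f ∈ ↑e \ {e}`.
-/

open Filter Topology Set

section Algebra

variable {E : Type*} [CommSemigroup E]

def upSet (e : E) : Set E := {f | e * f = e}

def downSet (e : E) : Set E := {x | x * e = x}

@[simp] lemma mem_upSet {e f : E} : f ∈ upSet e ↔ e * f = e := Iff.rfl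

@[simp] lemma mem_downSet {e x : E} : x ∈ downSet e ↔ x * e = x := Iff.rfl

lemma mul_eq_left_trans {a b c : E} (hab : a * b = a) (hbc : b * c = b) : a * c = a :=
  calc a * c = a * b * c := by rw [hab]
    _ = a * b := by rw [mul_assoc, hbc]
    _ = a := hab

lemma upSet_subset_upSet {e f : E} (h : e * f = e) : upSet f ⊆ upSet e :=
  fun _ hg => mul_eq_left_trans h hg

lemma eq_of_mem_upSet_of_mem_upSet {e f : E} (hf : f ∈ upSet e) (he : e ∈ upSet f) : e = f :=
  calc e = e * f := hf.symm
    _ = f * e := mul_comm e f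
    _ = f := he

lemma injective_of_mem_downSet_of_notMem_upSet (hidem : ∀ e : E, e * e = e) {z : ℕ → E}
    (hdown : ∀ n, z (n + 1) ∈ downSet (z n)) (hnotup : ∀ n, z (n + 1) ∉ upSet (z n)) :
    Function.Injective z := by
  have hmono : Monotone (upSet ∘ z) :=
    monotone_nat_of_le_succ fun n => upSet_subset_upSet (hdown n)
  refine Function.Injective.of_lt_imp_ne fun m n hmn heq => ?_
  obtain ⟨k, hmk, rfl⟩ : ∃ k, m ≤ k ∧ n = k + 1 := ⟨n - 1, by omega, by omega⟩
  have hmem : z m ∈ upSet (z k) := hmono hmk (hidem (z m))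
  exact hnotup k (heq ▸ hmem)

end Algebra

section Topology

variable {E : Type*} [CommSemigroup E] [TopologicalSpace E] [ContinuousMul E]

lemma isClosed_upSet [T2Space E] (e : E) : IsClosed (upSet e) :=
  isClosed_eq (continuous_const_mul e) continuous_const

lemma isClosed_downSet [T2Space E] (e : E) : IsClosed (downSet e) :=
  isClosed_eq (continuous_mul_const e) continuous_id

lemma IsCompact.exists_forall_mem_upSet [T2Space E] (hidem : ∀ e : E, e * e = e) {K : Set E}
    (hK : IsCompact K) {z : ℕ → E} (hzK : ∀ n, z n ∈ K) (hz : ∀ n, z (n + 1) ∈ downSet (z n)) :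
    ∃ w, ∀ n, z n ∈ upSet w := by
  obtain ⟨w, hw⟩ := IsCompact.nonempty_iInter_of_sequence_nonempty_isCompact_isClosed
    (fun n => K ∩ downSet (z n)) (fun n _ hx => ⟨hx.1, mul_eq_left_trans hx.2 (hz n)⟩)
    (fun n => ⟨z n, hzK n, hidem (z n)⟩) (hK.inter_right (isClosed_downSet _))
    (fun n => hK.isClosed.inter (isClosed_downSet _))
  exact ⟨w, fun n => (mem_iInter.1 hw n).2⟩

lemma exists_mem_downSet_notMem_upSet [T1Space E] (hidem : ∀ e : E, e * e = e)
    (hup : ∀ e : E, (upSet e).Finite) {e : E} (he : ∃ᶠ x in 𝓝 e, x ∈ downSet e ∧ x ≠ e)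
    {U : Set E} (hU : IsOpen U) {x : E} (hxU : x ∈ U) (hxe : x ∈ downSet e) :
    ∃ y ∈ U ∩ downSet e, y ∈ downSet x ∧ y ∉ upSet x := by
  have hnear : ∀ᶠ t in 𝓝 e, x * t ∈ U := by
    have hcont := (continuous_const_mul x).tendsto e
    rw [show x * e = x from hxe] at hcont
    exact hcont.eventually (hU.mem_nhds hxU)
  have hfar : ∀ᶠ t in 𝓝 e, t ∉ upSet x \ {e} :=
    (hup x).sdiff.isClosed.isOpen_compl.mem_nhds fun h => h.2 rfl
  obtain ⟨t, ⟨hte, hne⟩, htU, htx⟩ := (he.and_eventually (hnear.and hfar)).exists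
  refine ⟨x * t, ⟨htU, by rw [mem_downSet, mul_assoc, hte]⟩, ?_, fun h => htx ⟨?_, hne⟩⟩
  · rw [mem_downSet, mul_right_comm, hidem]
  · rwa [mem_upSet, ← mul_assoc, hidem] at h

variable [T2Space E] [LocallyCompactSpace E]

lemma eventually_mem_downSet_imp_eq (hidem : ∀ e : E, e * e = e)
    (hup : ∀ e : E, (upSet e).Finite) (e : E) : ∀ᶠ x in 𝓝 e, x ∈ downSet e → x = e := by
  by_contra h
  have he : ∃ᶠ x in 𝓝 e, x ∈ downSet e ∧ x ≠ e := by
    simpa only [not_eventually, Classical.not_imp] using h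
  obtain ⟨K, hK, hKe⟩ := exists_compact_mem_nhds e
  set D := interior K ∩ downSet e
  have hstep : ∀ x ∈ D, ∃ y ∈ D, y ∈ downSet x ∧ y ∉ upSet x := fun x hx =>
    exists_mem_downSet_notMem_upSet hidem hup he isOpen_interior hx.1 hx.2
  obtain ⟨y₀, hy₀⟩ : D.Nonempty :=
    (he.and_eventually (interior_mem_nhds.2 hKe)).exists.imp fun _ hx => ⟨hx.2, hx.1.1⟩
  choose! g hgD hg using hstep
  set z : ℕ → E := fun n => g^[n] y₀
  have hzD : ∀ n, z n ∈ D := fun n => MapsTo.iterate (fun x hx => hgD x hx) n hy₀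
  have hzsucc : ∀ n, z (n + 1) = g (z n) := fun n => Function.iterate_succ_apply' g n y₀
  have hdown : ∀ n, z (n + 1) ∈ downSet (z n) := fun n => hzsucc n ▸ (hg _ (hzD n)).1
  have hnotup : ∀ n, z (n + 1) ∉ upSet (z n) := fun n => hzsucc n ▸ (hg _ (hzD n)).2
  obtain ⟨w, hw⟩ := hK.exists_forall_mem_upSet hidem (fun n => interior_subset (hzD n).1) hdown
  exact infinite_of_injective_forall_mem
    (injective_of_mem_downSet_of_notMem_upSet hidem hdown hnotup) hw (hup w)

lemma isOpen_upSet (hidem : ∀ e : E, e * e = e) (hup : ∀ e : E, (upSet e).Finite) (e : E) :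
    IsOpen (upSet e) := by
  refine isOpen_iff_mem_nhds.2 fun f hf => ?_
  have hcont := (continuous_const_mul e).tendsto f
  rw [show e * f = e from hf] at hcont
  filter_upwards [hcont.eventually (eventually_mem_downSet_imp_eq hidem hup e)] with x hx
  exact hx (by rw [mem_downSet, mul_right_comm, hidem])

lemma nhds_eq_pure_of_finite_upSet (hidem : ∀ e : E, e * e = e)
    (hup : ∀ e : E, (upSet e).Finite) (e : E) : 𝓝 e = pure e := by
  refine le_antisymm (le_pure_iff.2 ?_) (pure_le_nhds e)
  have hsep : ∀ f ∈ upSet e \ {e}, ∀ᶠ x in 𝓝 e, x ∉ upSet f := fun f hf =>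
    (isClosed_upSet f).isOpen_compl.mem_nhds fun he =>
      hf.2 (eq_of_mem_upSet_of_mem_upSet hf.1 he).symm
  filter_upwards [(isOpen_upSet hidem hup e).mem_nhds (hidem e),
    (hup e).sdiff.eventually_all.2 hsep] with x hxe hx
  by_contra hne
  exact hx x ⟨hxe, hne⟩ (hidem x)

end Topology

theorem semilattice_finite_upsets_locally_compact_discrete_general
    {E : Type*} [CommSemigroup E]
    (hidem : ∀ e : E, e * e = e)
    (hup : ∀ e : E, {f : E | e * f = e}.Finite)
    [TopologicalSpace E] [T2Space E] [LocallyCompactSpace E]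
    [ContinuousMul E] :
    DiscreteTopology E :=
  discreteTopology_iff_nhds.2 (nhds_eq_pure_of_finite_upSet hidem hup)

/-- an infinite semilattice in which every up-set `↑e = {f | e * f = e}` is
finite admits no locally compact Hausdorff topology with (jointly) continuous operation
other than the discrete one. -/
theorem semilattice_finite_upsets_locally_compact_discrete
    {E : Type*} [CommSemigroup E] [Infinite E]
    (hidem : ∀ e : E, e * e = e)
    (hup : ∀ e : E, {f : E | e * f = e}.Finite)
    [TopologicalSpace E] [T2Space E] [LocallyCompactSpace E]
    [ContinuousMul E] :
    DiscreteTopology E :=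
  semilattice_finite_upsets_locally_compact_discrete_general hidem hup
end

section
/- If the semigroup I∞↗(ℕ) is endowed with a locally compact Hausdorff topology making its multiplication jointly continuous (so that it is a topological semigroup), then the set of idempotents E(I∞↗(ℕ)), with the subspace topology, is a discrete space. -/
open Set

/-!
The idempotents of `I∞↗(ℕ)` are the identities of cofinite sets: they commute, and each has
only finitely many idempotents above it. If an idempotent `e` were not isolated among the
idempotents, take a compact neighbourhood `K = U₀` of `e`, neighbourhoods `U₀ ⊇ U₁ ⊇ ⋯` of `e`
with `Uₖ₊₁ Uₖ₊₁ ⊆ Uₖ`, and pairwise distinct idempotents `yₖ ∈ Uₖ₊₁`. All products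
`y₀ y₁ ⋯ yₙ` lie in `K`, so they have a limit `x` along an ultrafilter; as the products decrease,
`x` is an idempotent lying below every `yₖ`, hence below infinitely many idempotents.
-/

open Filter Topology Function

def prefixProd {S : Type*} [Mul S] (y : ℕ → S) : ℕ → S
  | 0 => y 0
  | n + 1 => prefixProd y n * y (n + 1)

theorem exists_injective_forall_mem {α : Type*} {s : ℕ → Set α} (hs : ∀ n, (s n).Infinite) :
    ∃ y : ℕ → α, Injective y ∧ ∀ n, y n ∈ s n := by
  classical
  choose next hnext_mem hnext_fresh using fun n (F : Finset α) => (hs n).exists_notMem_finset F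
  let chosen : ℕ → Finset α := fun n => Nat.rec ∅ (fun k F => insert (next k F) F) n
  have hmem : ∀ {m n}, m < n → next m (chosen m) ∈ chosen n := by
    intro m n hmn
    induction n with
    | zero => omega
    | succ n ih =>
      rcases (Nat.lt_succ_iff.mp hmn).lt_or_eq with h | rfl
      · exact Finset.mem_insert_of_mem (ih h)
      · exact Finset.mem_insert_self _ _
  refine ⟨fun n => next n (chosen n), fun m n (h : next m _ = next n _) => ?_,
    fun n => hnext_mem _ _⟩
  by_contra hne
  rcases Nat.lt_or_gt_of_ne hne with hmn | hnm
  · exact hnext_fresh n _ (h ▸ hmem hmn)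
  · exact hnext_fresh m _ (h ▸ hmem hnm)

section Semigroup

variable {S : Type*} [Semigroup S]

theorem prefixProd_succ' (y : ℕ → S) (n : ℕ) :
    prefixProd y (n + 1) = y 0 * prefixProd (fun i => y (i + 1)) n := by
  induction n with
  | zero => rfl
  | succ n ih => rw [prefixProd, ih, prefixProd, mul_assoc]

theorem prefixProd_mem {y : ℕ → S} {u : ℕ → Set S} (hanti : ∀ k, u (k + 1) ⊆ u k)
    (hmul : ∀ k, ∀ a ∈ u (k + 1), ∀ b ∈ u (k + 1), a * b ∈ u k) (hy : ∀ k, y k ∈ u (k + 1))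
    (n : ℕ) : prefixProd y n ∈ u 0 := by
  induction n generalizing y u with
  | zero => exact hanti 0 (hy 0)
  | succ n ih =>
    rw [prefixProd_succ']
    exact hmul 0 _ (hy 0) _
      (ih (u := fun k => u (k + 1)) (fun _ => hanti _) (fun _ => hmul _) fun _ => hy _)

theorem commute_prefixProd {y : ℕ → S} (hcomm : ∀ m n, Commute (y m) (y n)) (m n : ℕ) :
    Commute (prefixProd y n) (y m) := by
  induction n with
  | zero => exact hcomm 0 m
  | succ n ih => exact ih.mul_left (hcomm (n + 1) m)

theorem isIdempotentElem_prefixProd {y : ℕ → S} (hcomm : ∀ m n, Commute (y m) (y n))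
    (hidem : ∀ n, IsIdempotentElem (y n)) (n : ℕ) : IsIdempotentElem (prefixProd y n) := by
  induction n with
  | zero => exact hidem 0
  | succ n ih => exact ih.mul_of_commute (commute_prefixProd hcomm _ n) (hidem _)

theorem prefixProd_mul_of_le {y : ℕ → S} (hcomm : ∀ m n, Commute (y m) (y n))
    (hidem : ∀ n, IsIdempotentElem (y n)) {i n : ℕ} (hi : i ≤ n) :
    prefixProd y n * y i = prefixProd y n := by
  induction n with
  | zero => obtain rfl := Nat.le_zero.mp hi; exact hidem 0
  | succ n ih =>
    rcases hi.lt_or_eq with hi | rfl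
    · rw [prefixProd, mul_assoc, (hcomm _ _).eq, ← mul_assoc, ih (Nat.lt_succ_iff.mp hi)]
    · rw [prefixProd, mul_assoc, (hidem _).eq]

end Semigroup

section TopologicalSemigroup

variable {S : Type*} [Semigroup S] [TopologicalSpace S] [ContinuousMul S]

theorem exists_nhds_mul_subset_of_isIdempotentElem {e : S} (he : IsIdempotentElem e)
    {U : Set S} (hU : U ∈ 𝓝 e) : ∃ V ∈ 𝓝 e, V ⊆ U ∧ ∀ a ∈ V, ∀ b ∈ V, a * b ∈ U := by
  have hmul : ∀ᶠ p in 𝓝 e ×ˢ 𝓝 e, p.1 * p.2 ∈ U := by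
    have := tendsto_mul (a := e) (b := e)
    rw [nhds_prod_eq, he.eq] at this
    exact this hU
  obtain ⟨V, hV, hVU⟩ := eventually_prod_self_iff'.mp hmul
  exact ⟨V ∩ U, inter_mem hV hU, inter_subset_right, fun a ha b hb => hVU a ha.1 b hb.1⟩

theorem exists_seq_nhds_mul_subset_of_isIdempotentElem {e : S} (he : IsIdempotentElem e)
    {U : Set S} (hU : U ∈ 𝓝 e) :
    ∃ u : ℕ → Set S, u 0 = U ∧ (∀ k, u k ∈ 𝓝 e) ∧ (∀ k, u (k + 1) ⊆ u k) ∧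
      ∀ k, ∀ a ∈ u (k + 1), ∀ b ∈ u (k + 1), a * b ∈ u k := by
  choose! next hnext_nhds hnext_sub hnext_mul using
    fun V (hV : V ∈ 𝓝 e) => exists_nhds_mul_subset_of_isIdempotentElem he hV
  have hnhds : ∀ k, next^[k] U ∈ 𝓝 e := fun k => by
    induction k with
    | zero => exact hU
    | succ k ih => rw [iterate_succ_apply']; exact hnext_nhds _ ih
  refine ⟨fun k => next^[k] U, rfl, hnhds, fun k => ?_, fun k => ?_⟩
  · simp only [iterate_succ_apply']; exact hnext_sub _ (hnhds k)
  · simp only [iterate_succ_apply']; exact hnext_mul _ (hnhds k)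

variable [T2Space S] [LocallyCompactSpace S]

theorem exists_isIdempotentElem_infinite_setOf_mul_eq_of_accPt {e : S}
    (he : IsIdempotentElem e)
    (hcomm : ∀ a b : S, IsIdempotentElem a → IsIdempotentElem b → Commute a b)
    (hacc : AccPt e (𝓟 {a : S | IsIdempotentElem a})) :
    ∃ x : S, IsIdempotentElem x ∧ {a : S | IsIdempotentElem a ∧ x * a = x}.Infinite := by
  obtain ⟨K, hKc, hK⟩ := exists_compact_mem_nhds e
  obtain ⟨u, rfl, hu, hanti, hmul⟩ := exists_seq_nhds_mul_subset_of_isIdempotentElem he hK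
  obtain ⟨y, hyinj, hy⟩ :=
    exists_injective_forall_mem fun n => Set.Infinite.of_accPt (hacc.nhds_inter (hu (n + 1)))
  have hidem : ∀ n, IsIdempotentElem (y n) := fun n => (hy n).2
  have hycomm : ∀ m n, Commute (y m) (y n) := fun m n => hcomm _ _ (hidem m) (hidem n)
  obtain ⟨x, -, hx⟩ := hKc.exists_mapClusterPt (f := atTop) (u := prefixProd y)
    (tendsto_principal.mpr (.of_forall fun n => prefixProd_mem hanti hmul (fun k => (hy k).1) n))
  obtain ⟨𝒱, h𝒱, hlim⟩ := mapClusterPt_iff_ultrafilter.mp hx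
  have hx_idem : IsIdempotentElem x :=
    tendsto_nhds_unique
      ((hlim.mul hlim).congr fun n => isIdempotentElem_prefixProd hycomm hidem n) hlim
  have hxy : ∀ i, x * y i = x := fun i =>
    have hprod : ∀ᶠ n in 𝒱, prefixProd y n * y i = prefixProd y n :=
      ((eventually_ge_atTop i).filter_mono h𝒱).mono fun _ hn => prefixProd_mul_of_le hycomm hidem hn
    tendsto_nhds_unique ((hlim.mul_const (y i)).congr' hprod) hlim
  exact ⟨x, hx_idem, infinite_of_injective_forall_mem hyinj fun i => ⟨hidem i, hxy i⟩⟩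

theorem discreteTopology_isIdempotentElem_of_finite_setOf_mul_eq
    (hcomm : ∀ a b : S, IsIdempotentElem a → IsIdempotentElem b → Commute a b)
    (hfin : ∀ x : S, IsIdempotentElem x → {a : S | IsIdempotentElem a ∧ x * a = x}.Finite) :
    DiscreteTopology {a : S // IsIdempotentElem a} :=
  discreteTopology_of_noAccPts fun _ he hacc =>
    let ⟨x, hx, hinf⟩ := exists_isIdempotentElem_infinite_setOf_mul_eq_of_accPt he hcomm hacc
    hinf (hfin x hx)

end TopologicalSemigroup

theorem isCMPB_ofSet {A : Set ℕ} (hA : Aᶜ.Finite) : IsCMPB (PartialEquiv.ofSet A) :=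
  ⟨by simpa using hA, by simpa using hA, fun _ _ _ _ h => h⟩

namespace Imon

def ofSet (A : Set ℕ) (hA : Aᶜ.Finite) : Imon :=
  ⟨⟦PartialEquiv.ofSet A⟧, isCMPB_ofSet hA⟩

theorem ofSet_mul_ofSet {A B : Set ℕ} (hA : Aᶜ.Finite) (hB : Bᶜ.Finite) :
    ofSet A hA * ofSet B hB = ofSet (A ∩ B) (by rw [compl_inter]; exact hA.union hB) :=
  Subtype.ext <| Quotient.sound ⟨by simp [PartialEquiv.trans_source], fun _ _ => rfl⟩

theorem source_compl_finite (a : Imon) : a.sourceᶜ.Finite := by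
  obtain ⟨q, h⟩ := a
  induction q using Quotient.inductionOn with | h e => exact h.1

theorem eq_ofSet_source {x : Imon} (hx : IsIdempotentElem x) :
    x = ofSet x.source x.source_compl_finite := by
  obtain ⟨q, h⟩ := x
  induction q using Quotient.inductionOn with | h e =>
  have hee : e.trans e ≈ e := Quotient.exact (congrArg Subtype.val hx)
  have hmaps : ∀ z ∈ e.source, e z ∈ e.source := fun z hz => by
    have hz' : z ∈ (e.trans e).source := hee.source_eq ▸ hz
    exact (PartialEquiv.trans_source e e ▸ hz').2
  -- `e (e z) = e z`, and `e` is injective on its source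
  refine Subtype.ext <| Quotient.sound ⟨rfl, fun z hz => ?_⟩
  exact e.injOn (hmaps z hz) hz (hee.eqOn (hee.source_eq.symm ▸ hz))

theorem source_mul_of_isIdempotentElem {a b : Imon} (ha : IsIdempotentElem a)
    (hb : IsIdempotentElem b) : (a * b).source = a.source ∩ b.source := by
  rw [eq_ofSet_source ha, eq_ofSet_source hb, ofSet_mul_ofSet]
  rfl

theorem commute_of_isIdempotentElem {a b : Imon} (ha : IsIdempotentElem a)
    (hb : IsIdempotentElem b) : Commute a b := by
  rw [eq_ofSet_source ha, eq_ofSet_source hb]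
  show _ * _ = _ * _
  rw [ofSet_mul_ofSet, ofSet_mul_ofSet]
  congr 1
  exact inter_comm _ _

theorem finite_setOf_isIdempotentElem_mul_eq {x : Imon} (hx : IsIdempotentElem x) :
    {a : Imon | IsIdempotentElem a ∧ x * a = x}.Finite := by
  refine Finite.of_finite_image (f := source) ?_ fun a ha b hb hab => ?_
  · refine (x.source_compl_finite.finite_subsets.image compl).subset ?_
    rintro _ ⟨a, ⟨ha, hxa⟩, rfl⟩
    refine ⟨a.sourceᶜ, compl_subset_compl.mpr ?_, compl_compl _⟩
    rw [← inter_eq_left, ← source_mul_of_isIdempotentElem hx ha, hxa]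
  · rw [eq_ofSet_source ha.1, eq_ofSet_source hb.1]
    congr 1

end Imon

/-- if `I∞↗(ℕ)` carries a locally compact Hausdorff topology with jointly
continuous multiplication, then its set of idempotents is discrete in the subspace
topology. -/
theorem Imon_locally_compact_idempotents_discrete
    [TopologicalSpace Imon] [T2Space Imon] [LocallyCompactSpace Imon]
    [ContinuousMul Imon] :
    DiscreteTopology {ε : Imon // ε * ε = ε} :=
  discreteTopology_isIdempotentElem_of_finite_setOf_mul_eq
    (fun _ _ => Imon.commute_of_isIdempotentElem) fun _ => Imon.finite_setOf_isIdempotentElem_mul_eq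
end

section
/- Every locally compact Hausdorff topology on the semigroup I∞↗(ℕ) with respect to which I∞↗(ℕ) is a topological inverse semigroup (multiplication is jointly continuous and the inversion map α ↦ α⁻¹ is continuous) is the discrete topology. -/
open Set

/-!
An element of `I∞↗(ℕ)` is determined by its domain and range, because a strictly monotone bijection
between two subsets of `ℕ` is unique; as domain and range are cofinite, `I∞↗(ℕ)` is countable.
A locally compact Hausdorff space is a Baire space, so some singleton `{x}` is open. For any `y`,
the order isomorphisms `a : dom x → dom y` and `b : ran y → ran x` give `a * y * b = x`, while every
`w` with `a * w * b = x` has `dom y ⊆ dom w` and `ran y ⊆ ran w`, and there are only finitely many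
such `w`. So `y` has a finite open neighbourhood, and `{y}` is open.
-/

theorem StrictMonoOn.eqOn_of_image_eq {α β : Type*} [LinearOrder α] [WellFoundedLT α] [Preorder β]
    {s : Set α} {f g : α → β} (hf : StrictMonoOn f s) (hg : StrictMonoOn g s)
    (h : f '' s = g '' s) : EqOn f g s := fun x hx => by
  have hfg : s.domRestrict f = s.domRestrict g := by
    rw [← hf.domRestrict.range_inj hg.domRestrict, range_domRestrict, range_domRestrict, h]
  exact congrFun hfg ⟨x, hx⟩

theorem exists_isOpen_singleton_of_countable (X : Type*) [TopologicalSpace X] [BaireSpace X]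
    [T1Space X] [Countable X] [Nonempty X] : ∃ x : X, IsOpen {x} := by
  obtain ⟨x, hx⟩ := nonempty_interior_of_iUnion_of_closed (fun _ : X => isClosed_singleton)
    (iUnion_of_singleton X)
  exact ⟨x, interior_eq_iff_isOpen.mp (hx.subset_singleton_iff.mp interior_subset)⟩

theorem discreteTopology_of_isOpen_singleton {X : Type*} [TopologicalSpace X] [T1Space X]
    {x : X} (hx : IsOpen {x})
    (h : ∀ y, ∃ f : X → X, Continuous f ∧ f y = x ∧ (f ⁻¹' {x}).Finite) : DiscreteTopology X := by
  refine discreteTopology_iff_isOpen_singleton.mpr fun y => ?_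
  obtain ⟨f, hf, hfy, hfin⟩ := h y
  exact isOpen_singleton_of_finite_mem_nhds y ((hx.preimage hf).mem_nhds hfy) hfin

namespace PartialEquiv

variable {α β γ : Type*} {e : PartialEquiv α β} {e' : PartialEquiv β γ}

theorem trans_source_of_target_subset (h : e.target ⊆ e'.source) :
    (e.trans e').source = e.source := by
  rw [trans_source]
  exact inter_eq_left.mpr fun x hx => h (e.map_source hx)

theorem trans_target_of_source_subset (h : e'.source ⊆ e.target) :
    (e.trans e').target = e'.target := by
  rw [trans_target]
  exact inter_eq_left.mpr fun x hx => h (e'.map_target hx)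

theorem target_subset_of_source_subset_trans_source (h : e.source ⊆ (e.trans e').source) :
    e.target ⊆ e'.source := fun y hy => by
  simpa [e.right_inv hy] using (h (e.map_target hy)).2

theorem source_subset_of_target_subset_trans_target (h : e'.target ⊆ (e.trans e').target) :
    e'.source ⊆ e.target :=
  target_subset_of_source_subset_trans_source (e := e'.symm) (e' := e.symm)
    (by simpa [trans_symm_eq_symm_trans_symm] using h)

end PartialEquiv

theorem IsCMPB.strictMonoOn {e : PartialEquiv ℕ ℕ} (he : IsCMPB e) : StrictMonoOn e e.source :=
  fun _ hm _ hn => he.2.2 hm hn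

theorem IsCMPB.eqOn_of_source_eq_of_target_eq {e e' : PartialEquiv ℕ ℕ} (he : IsCMPB e)
    (he' : IsCMPB e') (hs : e.source = e'.source) (ht : e.target = e'.target) :
    EqOn e e' e.source :=
  he.strictMonoOn.eqOn_of_image_eq (hs ▸ he'.strictMonoOn) <| by
    rw [e.image_source_eq_target, hs, e'.image_source_eq_target, ht]

theorem exists_isCMPB_source_target {S T : Set ℕ} (hS : Sᶜ.Finite) (hT : Tᶜ.Finite) :
    ∃ e, IsCMPB e ∧ e.source = S ∧ e.target = T := by
  classical
  have hSi : S.Infinite := by simpa using hS.infinite_compl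
  have hTi : T.Infinite := by simpa using hT.infinite_compl
  -- the `n`-th element of `S` goes to the `n`-th element of `T`
  let e : PartialEquiv ℕ ℕ :=
    { toFun n := Nat.nth (· ∈ T) (Nat.count (· ∈ S) n)
      invFun n := Nat.nth (· ∈ S) (Nat.count (· ∈ T) n)
      source := S
      target := T
      map_source' _ _ := Nat.nth_mem_of_infinite hTi _
      map_target' _ _ := Nat.nth_mem_of_infinite hSi _
      left_inv' n hn := by
        simp only [Nat.count_nth_of_infinite (p := (· ∈ T)) hTi, Nat.nth_count hn]
      right_inv' n hn := by
        simp only [Nat.count_nth_of_infinite (p := (· ∈ S)) hSi, Nat.nth_count hn] }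
  refine ⟨e, ⟨hS, hT, fun m n hm _ hmn => ?_⟩, rfl, rfl⟩
  exact (Nat.nth_lt_nth hTi).mpr (Nat.count_strict_mono hm hmn)

namespace Imon

theorem ext_of_source_eq_of_target_eq {w w' : Imon} (hs : w.source = w'.source)
    (ht : w.target = w'.target) : w = w' := by
  rcases w with ⟨⟨e⟩, he⟩
  rcases w' with ⟨⟨e'⟩, he'⟩
  exact Subtype.ext <| Quotient.sound ⟨hs, he.eqOn_of_source_eq_of_target_eq he' hs ht⟩

theorem finite_compl_source (w : Imon) : w.sourceᶜ.Finite := by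
  rcases w with ⟨⟨e⟩, he⟩
  exact he.1

theorem finite_compl_target (w : Imon) : w.targetᶜ.Finite := by
  rcases w with ⟨⟨e⟩, he⟩
  exact he.2.1

instance : Countable Imon :=
  Function.Injective.countable (f := fun w : Imon =>
    (w.finite_compl_source.toFinset, w.finite_compl_target.toFinset)) fun w w' h => by
    simp only [Prod.mk.injEq, Finite.toFinset_inj, compl_inj_iff] at h
    exact ext_of_source_eq_of_target_eq h.1 h.2

theorem finite_setOf_subset_source_subset_target (y : Imon) :
    {w : Imon | y.source ⊆ w.source ∧ y.target ⊆ w.target}.Finite := by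
  have hsup {A : Set ℕ} (hA : Aᶜ.Finite) : {B : Set ℕ | A ⊆ B}.Finite :=
    (hA.finite_subsets.image compl).subset fun B hB =>
      ⟨Bᶜ, compl_subset_compl.mpr hB, compl_compl B⟩
  refine Finite.of_finite_image (f := fun w : Imon => (w.source, w.target))
    (((hsup y.finite_compl_source).prod (hsup y.finite_compl_target)).subset ?_)
    fun w _ w' _ h => ext_of_source_eq_of_target_eq (congrArg Prod.fst h) (congrArg Prod.snd h)
  rintro _ ⟨w, hw, rfl⟩
  exact hw

open PartialEquiv in
theorem exists_mul_mul_eq (x y : Imon) : ∃ a b : Imon, a * y * b = x ∧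
    ∀ w, a * w * b = x → y.source ⊆ w.source ∧ y.target ⊆ w.target := by
  rcases x with ⟨⟨ex⟩, hx⟩
  rcases y with ⟨⟨ey⟩, hy⟩
  obtain ⟨a, ha, ha_src, ha_tgt⟩ := exists_isCMPB_source_target hx.1 hy.1
  obtain ⟨b, hb, hb_src, hb_tgt⟩ := exists_isCMPB_source_target hy.2.1 hx.2.1
  have hay : (a.trans ey).target = b.source := by
    rw [trans_target_of_source_subset ha_tgt.ge, hb_src]
  refine ⟨⟨⟦a⟧, ha⟩, ⟨⟦b⟧, hb⟩, ext_of_source_eq_of_target_eq ?_ ?_, ?_⟩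
  · show ((a.trans ey).trans b).source = ex.source
    rw [trans_source_of_target_subset hay.le, trans_source_of_target_subset ha_tgt.le, ha_src]
  · show ((a.trans ey).trans b).target = ex.target
    rw [trans_target_of_source_subset hay.ge, hb_tgt]
  · rintro ⟨⟨z⟩, hz⟩ h
    have hs : ((a.trans z).trans b).source = a.source := ha_src ▸ congrArg Imon.source h
    have ht : ((a.trans z).trans b).target = b.target := hb_tgt ▸ congrArg Imon.target h
    refine ⟨show ey.source ⊆ z.source from ?_, show ey.target ⊆ z.target from ?_⟩
    · rw [← ha_tgt]
      exact target_subset_of_source_subset_trans_source fun n hn => (hs.ge hn).1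
    · rw [← hb_src]
      exact fun n hn => (source_subset_of_target_subset_trans_target ht.ge hn).1

end Imon

theorem Imon_locally_compact_inverse_discrete_general
    [TopologicalSpace Imon] [T2Space Imon] [LocallyCompactSpace Imon]
    [ContinuousMul Imon] :
    DiscreteTopology Imon := by
  have : Nonempty Imon := ⟨aGen⟩
  obtain ⟨x, hx⟩ := exists_isOpen_singleton_of_countable Imon
  refine discreteTopology_of_isOpen_singleton hx fun y => ?_
  obtain ⟨a, b, hy, hfiber⟩ := Imon.exists_mul_mul_eq x y
  exact ⟨fun w => a * w * b, by fun_prop, hy,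
    y.finite_setOf_subset_source_subset_target.subset hfiber⟩

/-- every locally compact Hausdorff topology making `I∞↗(ℕ)` a topological
inverse semigroup is discrete. -/
theorem Imon_locally_compact_inverse_discrete
    [TopologicalSpace Imon] [T2Space Imon] [LocallyCompactSpace Imon]
    [ContinuousMul Imon] (hinv : Continuous fun α : Imon => α⁻¹) :
    DiscreteTopology Imon :=
  Imon_locally_compact_inverse_discrete_general
end

section
/- Let S be a Hausdorff topological semigroup containing (an isomorphic copy of) I∞↗(ℕ) as a proper dense subsemigroup whose subspace topology is discrete. Then I∞↗(ℕ) is an open subset of S, and the complement S ∖ I∞↗(ℕ) is a two-sided ideal of S (i.e., for every χ ∈ S ∖ I∞↗(ℕ) and every α ∈ S, both χ * α and α * χ lie in S ∖ I∞↗(ℕ)). -/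
open Set

section Aux

lemma PEQ.mem_graph_mk (e : PartialEquiv ℕ ℕ) (p : ℕ × ℕ) :
    p ∈ PEQ.graph ⟦e⟧ ↔ p.1 ∈ e.source ∧ e p.1 = p.2 := Iff.rfl

lemma PEQ.graph_inj : Function.Injective PEQ.graph := by
  intro a b h
  induction a using Quotient.inductionOn with | h e =>
  induction b using Quotient.inductionOn with | h e' =>
  apply Quotient.sound
  have hsrc : e.source = e'.source := by
    ext n
    constructor
    · intro hn
      exact ((PEQ.mem_graph_mk e' (n, e n)).mp (h ▸ (PEQ.mem_graph_mk e (n, e n)).mpr ⟨hn, rfl⟩)).1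
    · intro hn
      exact ((PEQ.mem_graph_mk e (n, e' n)).mp (h ▸ (PEQ.mem_graph_mk e' (n, e' n)).mpr ⟨hn, rfl⟩)).1
  refine ⟨hsrc, fun n hn => ?_⟩
  exact ((PEQ.mem_graph_mk e' (n, e n)).mp (h ▸ (PEQ.mem_graph_mk e (n, e n)).mpr ⟨hn, rfl⟩)).2.symm

lemma Imon.graph_inj : Function.Injective Imon.graph :=
  fun _ _ h => Subtype.ext (PEQ.graph_inj h)

lemma finite_solL (b c : Imon) : {a : Imon | a * b = c}.Finite := by
  obtain ⟨f, hf⟩ := Quotient.exists_rep b.1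
  obtain ⟨g, hg⟩ := Quotient.exists_rep c.1
  have hcb : IsCMPB f := by have := b.2; rw [← hf] at this; exact this
  have hcg : IsCMPB g := by have := c.2; rw [← hg] at this; exact this
  set K : Set (ℕ × ℕ) := g.sourceᶜ ×ˢ f.sourceᶜ with hKdef
  have hK : K.Finite := hcg.1.prod hcb.1
  set G0 : Set (ℕ × ℕ) := (fun n => (n, f.symm (g n))) '' g.source with hG0def
  have key : ∀ a ∈ {a : Imon | a * b = c}, Imon.graph a = G0 ∪ (Imon.graph a ∩ K) := by
    intro a ha
    obtain ⟨e, he⟩ := Quotient.exists_rep a.1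
    have hmul : (⟦e.trans f⟧ : PEQ) = ⟦g⟧ := by
      rw [← PEQ.mk_mul, he, hf, hg]
      exact congrArg Subtype.val ha
    have h2 := Quotient.exact hmul
    have hsrc : (e.trans f).source = g.source := PartialEquiv.EqOnSource.source_eq h2
    have heqOn := PartialEquiv.EqOnSource.eqOn h2
    have hga : Imon.graph a = PEQ.graph ⟦e⟧ := (congrArg PEQ.graph he).symm
    rw [hga]
    ext ⟨n, m⟩
    rw [PEQ.mem_graph_mk]
    constructor
    · rintro ⟨hn, hm⟩
      by_cases hng : n ∈ g.source
      · left
        have hntf : n ∈ (e.trans f).source := hsrc ▸ hng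
        have hnef : n ∈ e.source ∧ e n ∈ f.source := by
          rw [PartialEquiv.trans_source] at hntf; exact hntf
        have hfg : f (e n) = g n := heqOn hntf
        refine ⟨n, hng, ?_⟩
        have : f.symm (g n) = m := by
          rw [← hfg, f.left_inv hnef.2, hm]
        show (n, f.symm (g n)) = (n, m)
        rw [this]
      · right
        refine ⟨(PEQ.mem_graph_mk e (n, m)).mpr ⟨hn, hm⟩, hng, ?_⟩
        intro hmf
        apply hng
        rw [← hsrc, PartialEquiv.trans_source]
        exact ⟨hn, by rw [Set.mem_preimage, hm]; exact hmf⟩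
    · rintro (⟨n', hn', hp⟩ | ⟨hmem, _⟩)
      · simp only [Prod.mk.injEq] at hp
        obtain ⟨rfl, rfl⟩ := hp
        have hntf : n' ∈ (e.trans f).source := hsrc ▸ hn'
        have hnef : n' ∈ e.source ∧ e n' ∈ f.source := by
          rw [PartialEquiv.trans_source] at hntf; exact hntf
        have hfg : f (e n') = g n' := heqOn hntf
        refine ⟨hnef.1, ?_⟩
        show e n' = f.symm (g n')
        rw [← hfg, f.left_inv hnef.2]
      · exact (PEQ.mem_graph_mk e (n, m)).mp hmem
  have himg : Imon.graph '' {a : Imon | a * b = c} ⊆ (fun T => G0 ∪ T) '' {T | T ⊆ K} := by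
    rintro _ ⟨a, ha, rfl⟩
    exact ⟨Imon.graph a ∩ K, Set.inter_subset_right, (key a ha).symm⟩
  have hfin : (Imon.graph '' {a : Imon | a * b = c}).Finite :=
    ((hK.finite_subsets).image _).subset himg
  exact Set.Finite.of_finite_image hfin (Imon.graph_inj.injOn)

lemma Imon.inv_inv' (a : Imon) : a⁻¹⁻¹ = a := by
  apply Subtype.ext
  obtain ⟨e, he⟩ := Quotient.exists_rep a.1
  show PEQ.symm (PEQ.symm a.1) = a.1
  rw [← he]
  rfl

lemma Imon.mul_inv_rev' (a b : Imon) : (a * b)⁻¹ = b⁻¹ * a⁻¹ := by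
  apply Subtype.ext
  obtain ⟨e, he⟩ := Quotient.exists_rep a.1
  obtain ⟨f, hf⟩ := Quotient.exists_rep b.1
  show PEQ.symm (a.1 * b.1) = PEQ.symm b.1 * PEQ.symm a.1
  rw [← he, ← hf]
  show (⟦(e.trans f).symm⟧ : PEQ) = ⟦f.symm.trans e.symm⟧
  rw [PartialEquiv.trans_symm_eq_symm_trans_symm]

lemma finite_solR (b c : Imon) : {a : Imon | b * a = c}.Finite := by
  have h := finite_solL b⁻¹ c⁻¹
  apply Set.Finite.of_finite_image (f := fun a : Imon => a⁻¹)
  · apply h.subset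
    rintro _ ⟨a, ha, rfl⟩
    show a⁻¹ * b⁻¹ = c⁻¹
    rw [← Imon.mul_inv_rev', ha]
  · intro x _ y _ hxy
    have := congrArg (fun z : Imon => z⁻¹) hxy
    simpa [Imon.inv_inv'] using this

lemma singleton_open_of_dense_discrete {S : Type*} [TopologicalSpace S] [T1Space S]
    {D : Set S} (hdense : Dense D) (hdisc : DiscreteTopology D) {x : S} (hx : x ∈ D) :
    IsOpen ({x} : Set S) := by
  have h1 : IsOpen ({⟨x, hx⟩} : Set D) := isOpen_discrete _
  rw [isOpen_induced_iff] at h1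
  obtain ⟨U, hU, hUeq⟩ := h1
  have hxU : x ∈ U := by
    have : (⟨x, hx⟩ : D) ∈ Subtype.val ⁻¹' U := by rw [hUeq]; rfl
    exact this
  have hUsub : U ⊆ {x} := by
    intro s hs
    by_contra hsx
    have hW : IsOpen (U \ {x}) := hU.sdiff isClosed_singleton
    obtain ⟨d, hdD, hdW⟩ := hdense.exists_mem_open hW ⟨s, hs, hsx⟩
    have : (⟨d, hdD⟩ : D) ∈ Subtype.val ⁻¹' U := hdW.1
    rw [hUeq] at this
    exact hdW.2 (by simpa using congrArg Subtype.val this)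
  have : U = {x} := le_antisymm hUsub (Set.singleton_subset_iff.mpr hxU)
  exact this ▸ hU

end Aux

/-- if a Hausdorff topological semigroup `S` contains a copy of `I∞↗(ℕ)` as
a proper dense discrete subsemigroup, then this copy is open in `S` and its complement is
a two-sided ideal of `S`. -/
theorem Imon_closure_in_topological_semigroup {S : Type*} [Semigroup S]
    [TopologicalSpace S] [T2Space S] [ContinuousMul S]
    (φ : Imon → S) (hφhom : ∀ x y : Imon, φ (x * y) = φ x * φ y)
    (hφinj : Function.Injective φ)
    (hproper : Set.range φ ≠ Set.univ)
    (hdense : Dense (Set.range φ))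
    (hdiscrete : DiscreteTopology (Set.range φ)) :
    IsOpen (Set.range φ) ∧
    ∀ χ ∈ (Set.range φ)ᶜ, ∀ α : S, χ * α ∈ (Set.range φ)ᶜ ∧ α * χ ∈ (Set.range φ)ᶜ := by
  have hopenD : IsOpen (Set.range φ) := by
    apply isOpen_iff_forall_mem_open.mpr
    rintro s ⟨x, rfl⟩
    exact ⟨{φ x}, Set.singleton_subset_iff.mpr ⟨x, rfl⟩,
      singleton_open_of_dense_discrete hdense hdiscrete ⟨x, rfl⟩, rfl⟩
  refine ⟨hopenD, ?_⟩
  intro χ hχ α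
  have key : ∀ (β γ : S), β * γ ∈ Set.range φ →
      (∀ (b c : Imon), ({a : Imon | a * b = c}).Finite) →
      True := fun _ _ _ _ => trivial
  constructor
  · intro hmem
    obtain ⟨c, hc⟩ := hmem
    have hopen : IsOpen ((fun p : S × S => p.1 * p.2) ⁻¹' {φ c}) :=
      (singleton_open_of_dense_discrete hdense hdiscrete ⟨c, rfl⟩).preimage continuous_mul
    have hmemp : (χ, α) ∈ (fun p : S × S => p.1 * p.2) ⁻¹' {φ c} := by
      simp only [Set.mem_preimage, Set.mem_singleton_iff]
      exact hc.symm
    obtain ⟨U, V, hU, hV, hχU, hαV, hUV⟩ := isOpen_prod_iff.mp hopen χ α hmemp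
    obtain ⟨_, ⟨y, rfl⟩, hyV⟩ := hdense.exists_mem_open hV ⟨α, hαV⟩
    have hAfin : ({x : Imon | x * y = c}).Finite := finite_solL y c
    have hsub : U ∩ Set.range φ ⊆ φ '' {x : Imon | x * y = c} := by
      rintro _ ⟨hu, x, rfl⟩
      refine ⟨x, ?_, rfl⟩
      apply hφinj
      rw [hφhom]
      exact hUV (Set.mk_mem_prod hu hyV)
    have hclosed : IsClosed (φ '' {x : Imon | x * y = c}) := (hAfin.image φ).isClosed
    have hcl : χ ∈ closure (φ '' {x : Imon | x * y = c}) := by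
      rw [mem_closure_iff]
      intro W hW hχW
      obtain ⟨d, hdD, hdWU⟩ := hdense.exists_mem_open (hW.inter hU) ⟨χ, hχW, hχU⟩
      exact ⟨d, hdWU.1, hsub ⟨hdWU.2, hdD⟩⟩
    rw [hclosed.closure_eq] at hcl
    obtain ⟨x, _, rfl⟩ := hcl
    exact hχ ⟨x, rfl⟩
  · intro hmem
    obtain ⟨c, hc⟩ := hmem
    have hopen : IsOpen ((fun p : S × S => p.1 * p.2) ⁻¹' {φ c}) :=
      (singleton_open_of_dense_discrete hdense hdiscrete ⟨c, rfl⟩).preimage continuous_mul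
    have hmemp : (α, χ) ∈ (fun p : S × S => p.1 * p.2) ⁻¹' {φ c} := by
      simp only [Set.mem_preimage, Set.mem_singleton_iff]
      exact hc.symm
    obtain ⟨U, V, hU, hV, hαU, hχV, hUV⟩ := isOpen_prod_iff.mp hopen α χ hmemp
    obtain ⟨_, ⟨y, rfl⟩, hyU⟩ := hdense.exists_mem_open hU ⟨α, hαU⟩
    have hAfin : ({x : Imon | y * x = c}).Finite := finite_solR y c
    have hsub : V ∩ Set.range φ ⊆ φ '' {x : Imon | y * x = c} := by
      rintro _ ⟨hv, x, rfl⟩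
      refine ⟨x, ?_, rfl⟩
      apply hφinj
      rw [hφhom]
      exact hUV (Set.mk_mem_prod hyU hv)
    have hclosed : IsClosed (φ '' {x : Imon | y * x = c}) := (hAfin.image φ).isClosed
    have hcl : χ ∈ closure (φ '' {x : Imon | y * x = c}) := by
      rw [mem_closure_iff]
      intro W hW hχW
      obtain ⟨d, hdD, hdWV⟩ := hdense.exists_mem_open (hW.inter hV) ⟨χ, hχW, hχV⟩
      exact ⟨d, hdWV.1, hsub ⟨hdWV.2, hdD⟩⟩
    rw [hclosed.closure_eq] at hcl
    obtain ⟨x, _, rfl⟩ := hcl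
    exact hχ ⟨x, rfl⟩
end
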